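/- Let K(z) = z/(1+z)² be the Koebe function. Let p ≥ 0 and q ∈ ℝ with 3p − 2q − 1 > 0. Then there exist constants c > 0 and C > 0 such that for every r ∈ [1/2, 1), c (1 − r)^{−(3p − 2q − 1)} ≤ ∫₀^{2π} |K′(r e^{iθ})|^p / |K(r e^{iθ})|^q dθ ≤ C (1 − r)^{−(3p − 2q − 1)}. In particular, the Koebe function saturates the universal bound: its generalized integral means spectrum equals 3p − 2q − 1. -/

import Mathlib

/-!
On the circle `z = r e^{iθ}` the integrand equals `r^{-q} |1 - z|^p |1 + z|^{-s}` with
`s = 3p - 2q > 1`, so everything is governed by `|1 + z|`, which for `r ∈ [1/2, 1)` and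
`θ ∈ [0, 2π]` is comparable to `δ(θ) = (1 - r) + |θ - π|`. As `|1 - z| ≤ 2`, the integral is at most
a constant times `∫ δ^{-s} ≤ 2 (1 - r)^{1-s} / (s - 1)`. Conversely, on the arc
`π ≤ θ ≤ π + (1 - r)` we have `δ ≤ 2 (1 - r)` and `|1 - z| ≥ 2 - |1 + z| ≥ 1`, so this arc of
length `1 - r` alone contributes a constant times `(1 - r)^{1-s}`.
-/

open MeasureTheory Real

lemma deriv_koebe {z : ℂ} (hz : 1 + z ≠ 0) :
    deriv (fun z : ℂ => z / (1 + z) ^ 2) z = (1 - z) / (1 + z) ^ 3 := by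
  have hden : HasDerivAt (fun w : ℂ => (1 + w) ^ 2) (2 * (1 + z)) z := by
    simpa using ((hasDerivAt_id z).const_add 1).fun_pow 2
  rw [((hasDerivAt_id' z).fun_div hden (pow_ne_zero 2 hz)).deriv]
  field_simp
  ring

lemma norm_deriv_koebe_rpow_div_norm_koebe_rpow {z : ℂ} (hz : z ≠ 0) (hz1 : 1 + z ≠ 0)
    (p q : ℝ) :
    ‖deriv (fun z : ℂ => z / (1 + z) ^ 2) z‖ ^ p / ‖z / (1 + z) ^ 2‖ ^ q
      = ‖z‖ ^ (-q) * ‖1 - z‖ ^ p * ‖1 + z‖ ^ (-(3 * p - 2 * q)) := by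
  have hB : 0 < ‖1 + z‖ := norm_pos_iff.mpr hz1
  have hr : 0 < ‖z‖ := norm_pos_iff.mpr hz
  rw [deriv_koebe hz1, norm_div, norm_div, norm_pow, norm_pow,
    div_rpow (norm_nonneg _) (by positivity), div_rpow hr.le (by positivity),
    ← rpow_natCast_mul hB.le, ← rpow_natCast_mul hB.le, rpow_neg hr.le,
    rpow_neg hB.le, rpow_sub hB]
  push_cast
  field_simp

lemma one_add_circleMap_ne_zero {r : ℝ} (hr : |r| < 1) (θ : ℝ) : 1 + circleMap 0 r θ ≠ 0 := by
  intro h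
  have := norm_circleMap_zero r θ
  rw [eq_neg_of_add_eq_zero_right h, norm_neg, norm_one] at this
  linarith

lemma norm_one_add_circleMap_sq (r θ : ℝ) :
    ‖1 + circleMap 0 r θ‖ ^ 2 = (1 - r) ^ 2 + 2 * r * (1 + cos θ) := by
  rw [Complex.sq_norm, Complex.normSq_apply]
  simp only [Complex.add_re, Complex.add_im, Complex.one_re, Complex.one_im,
    circleMap_zero_re, circleMap_zero_im]
  linear_combination r ^ 2 * sin_sq_add_cos_sq θ

lemma norm_one_add_circleMap_le {r : ℝ} (hr0 : 0 ≤ r) (hr1 : r ≤ 1) (θ : ℝ) :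
    ‖1 + circleMap 0 r θ‖ ≤ 1 - r + |θ - π| := by
  have hcos : 1 + cos θ ≤ (θ - π) ^ 2 / 2 := by
    have := one_sub_sq_div_two_le_cos (x := θ - π)
    rw [cos_sub_pi] at this
    linarith
  refine le_of_pow_le_pow_left₀ two_ne_zero (by linarith [abs_nonneg (θ - π)]) ?_
  rw [norm_one_add_circleMap_sq]
  nlinarith [abs_nonneg (θ - π), sq_abs (θ - π)]

lemma le_norm_one_add_circleMap {r θ : ℝ} (hr : 1 / 2 ≤ r) (hθ : |θ - π| ≤ π) :
    (1 - r + |θ - π|) / 4 ≤ ‖1 + circleMap 0 r θ‖ := by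
  have hcos : |θ - π| ^ 2 / 5 ≤ 1 + cos θ := by
    have hπ : 1 / 5 ≤ 2 / π ^ 2 := by
      rw [div_le_div_iff₀ (by norm_num) (by positivity)]
      nlinarith [pi_lt_d2, pi_pos]
    have := cos_le_one_sub_mul_cos_sq hθ
    rw [cos_sub_pi, sq_abs] at *
    nlinarith [sq_nonneg (θ - π)]
  refine le_of_pow_le_pow_left₀ two_ne_zero (norm_nonneg _) ?_
  rw [norm_one_add_circleMap_sq]
  nlinarith [abs_nonneg (θ - π), sq_nonneg (1 - r - |θ - π|), neg_one_le_cos θ]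

lemma integral_add_rpow_neg_le {a s : ℝ} (ha : 0 < a) (hs : 1 < s) {d : ℝ} (hd : 0 ≤ d) :
    ∫ x in (0 : ℝ)..d, (a + x) ^ (-s) ≤ a ^ (1 - s) / (s - 1) := by
  have h0 : (0 : ℝ) ∉ Set.uIcc a (a + d) := by
    rw [Set.uIcc_of_le (by linarith)]; exact fun h => ha.not_ge h.1
  rw [intervalIntegral.integral_comp_add_left (fun x => x ^ (-s)), add_zero,
    integral_rpow (Or.inr ⟨by linarith, h0⟩), show -s + 1 = -(s - 1) by ring,
    div_neg, ← neg_div, neg_sub, show -(s - 1) = 1 - s by ring]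
  gcongr
  exact sub_le_self _ (rpow_nonneg (by linarith) _)

lemma integral_add_abs_sub_rpow_neg_le {a s : ℝ} (ha : 0 < a) (hs : 1 < s) (c : ℝ) {d : ℝ}
    (hd : 0 ≤ d) :
    ∫ θ in (c - d)..(c + d), (a + |θ - c|) ^ (-s) ≤ 2 * (a ^ (1 - s) / (s - 1)) := by
  have hint : ∀ u v : ℝ, IntervalIntegrable (fun x : ℝ => (a + |x|) ^ (-s)) volume u v :=
    fun u v => (Continuous.rpow_const (by fun_prop)
      fun x => Or.inl (by positivity)).intervalIntegrable u v
  have hsymm : ∫ θ in (c - d)..(c + d), (a + |θ - c|) ^ (-s)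
      = 2 * ∫ x in (0 : ℝ)..d, (a + x) ^ (-s) := by
    rw [intervalIntegral.integral_comp_sub_right (fun x => (a + |x|) ^ (-s)), sub_sub_cancel_left,
      add_sub_cancel_left, ← intervalIntegral.integral_add_adjacent_intervals (hint _ 0) (hint 0 _),
      ← neg_zero, ← intervalIntegral.integral_comp_neg, neg_zero, two_mul]
    congr 1 <;> refine intervalIntegral.integral_congr fun x hx => ?_ <;>
      rw [Set.uIcc_of_le hd] at hx <;> simp [abs_of_nonneg hx.1]
  rw [hsymm]
  gcongr
  exact integral_add_rpow_neg_le ha hs hd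

lemma rpow_neg_mem_Icc_of_mem_Icc {r : ℝ} (hr : r ∈ Set.Icc (1 / 2 : ℝ) 1) (q : ℝ) :
    r ^ (-q) ∈ Set.Icc ((2 : ℝ) ^ (-|q|)) (2 ^ |q|) := by
  obtain ⟨hr, hr1⟩ := hr
  have hr0 : 0 < r := by linarith
  have hx1 : 1 ≤ r⁻¹ := one_le_inv_iff₀.mpr ⟨hr0, hr1⟩
  have hx2 : r⁻¹ ≤ 2 := by rw [inv_le_comm₀ hr0 two_pos]; linarith
  rw [rpow_neg hr0.le, ← inv_rpow hr0.le]
  constructor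
  · calc (2 : ℝ) ^ (-|q|) ≤ r⁻¹ ^ (-|q|) :=
          rpow_le_rpow_of_nonpos (by linarith) hx2 (by simp)
      _ ≤ r⁻¹ ^ q := rpow_le_rpow_of_exponent_le hx1 (neg_abs_le q)
  · calc r⁻¹ ^ q ≤ r⁻¹ ^ |q| := rpow_le_rpow_of_exponent_le hx1 (le_abs_self q)
      _ ≤ 2 ^ |q| := rpow_le_rpow (by linarith) hx2 (abs_nonneg q)

/-- `|K'(z)|^p / |K(z)|^q` at `z = r e^{iθ}`, rewritten using `K'(z) = (1 - z) / (1 + z)^3`. -/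
noncomputable def koebeMeanIntegrand (p q r θ : ℝ) : ℝ :=
  r ^ (-q) * ‖1 - circleMap 0 r θ‖ ^ p * ‖1 + circleMap 0 r θ‖ ^ (-(3 * p - 2 * q))

section koebeMeanIntegrand

variable {p q r : ℝ}

variable (p q) in
lemma koebe_integrand_eq_koebeMeanIntegrand (hr0 : 0 < r) (hr1 : r < 1) (θ : ℝ) :
    ‖deriv (fun z : ℂ => z / (1 + z) ^ 2) ((r : ℂ) * Complex.exp ((θ : ℂ) * Complex.I))‖ ^ p /
        ‖((r : ℂ) * Complex.exp ((θ : ℂ) * Complex.I)) /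
          (1 + (r : ℂ) * Complex.exp ((θ : ℂ) * Complex.I)) ^ 2‖ ^ q
      = koebeMeanIntegrand p q r θ := by
  rw [← circleMap_zero, norm_deriv_koebe_rpow_div_norm_koebe_rpow (circleMap_ne_center hr0.ne')
      (one_add_circleMap_ne_zero (abs_lt.mpr ⟨by linarith, hr1⟩) θ),
    norm_circleMap_zero, abs_of_pos hr0]
  rfl

variable (p q) in
lemma koebeMeanIntegrand_nonneg (hr : 0 ≤ r) (θ : ℝ) :
    0 ≤ koebeMeanIntegrand p q r θ :=
  mul_nonneg (mul_nonneg (rpow_nonneg hr _) (rpow_nonneg (norm_nonneg _) _))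
    (rpow_nonneg (norm_nonneg _) _)

lemma continuous_koebeMeanIntegrand (hp : 0 ≤ p) (hr : |r| < 1) :
    Continuous (koebeMeanIntegrand p q r) :=
  (continuous_const.mul ((continuous_const.sub (continuous_circleMap 0 r)).norm.rpow_const
    fun _ => Or.inr hp)).mul ((continuous_const.add (continuous_circleMap 0 r)).norm.rpow_const
    fun θ => Or.inl (norm_ne_zero_iff.mpr (one_add_circleMap_ne_zero hr θ)))

lemma koebeMeanIntegrand_le (hp : 0 ≤ p) (hpq : 0 ≤ 3 * p - 2 * q) (hr : 1 / 2 ≤ r)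
    (hr1 : r < 1) {θ : ℝ} (hθ : |θ - π| ≤ π) :
    koebeMeanIntegrand p q r θ
      ≤ 2 ^ |q| * 2 ^ p * 4 ^ (3 * p - 2 * q) * (1 - r + |θ - π|) ^ (-(3 * p - 2 * q)) := by
  have hD : 0 < 1 - r + |θ - π| := by linarith [abs_nonneg (θ - π)]
  have hnum : ‖1 - circleMap 0 r θ‖ ≤ 2 := by
    have := norm_sub_le (1 : ℂ) (circleMap 0 r θ)
    rw [norm_one, norm_circleMap_zero, abs_of_pos (by linarith)] at this
    linarith
  have hden : ‖1 + circleMap 0 r θ‖ ^ (-(3 * p - 2 * q))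
      ≤ 4 ^ (3 * p - 2 * q) * (1 - r + |θ - π|) ^ (-(3 * p - 2 * q)) := by
    calc ‖1 + circleMap 0 r θ‖ ^ (-(3 * p - 2 * q))
        ≤ ((1 - r + |θ - π|) / 4) ^ (-(3 * p - 2 * q)) :=
          rpow_le_rpow_of_nonpos (by positivity) (le_norm_one_add_circleMap hr hθ) (by linarith)
      _ = 4 ^ (3 * p - 2 * q) * (1 - r + |θ - π|) ^ (-(3 * p - 2 * q)) := by
          rw [div_rpow hD.le (by norm_num), div_eq_mul_inv, ← rpow_neg (by norm_num), neg_neg,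
            mul_comm]
  unfold koebeMeanIntegrand
  rw [mul_assoc _ (4 ^ _)]
  gcongr ?_ * ?_ * ?_
  · exact (rpow_neg_mem_Icc_of_mem_Icc ⟨hr, hr1.le⟩ q).2
  · exact rpow_le_rpow (norm_nonneg _) hnum hp

lemma le_koebeMeanIntegrand (hp : 0 ≤ p) (hpq : 0 ≤ 3 * p - 2 * q) (hr : 1 / 2 ≤ r)
    (hr1 : r < 1) {θ : ℝ} (hθ : θ ∈ Set.Icc π (π + (1 - r))) :
    2 ^ (-|q|) * (2 * (1 - r)) ^ (-(3 * p - 2 * q)) ≤ koebeMeanIntegrand p q r θ := by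
  have hplus : ‖1 + circleMap 0 r θ‖ ≤ 2 * (1 - r) := by
    have := norm_one_add_circleMap_le (by linarith) hr1.le θ
    rw [abs_of_nonneg (by linarith [hθ.1])] at this
    linarith [hθ.2]
  have hminus : 1 ≤ ‖1 - circleMap 0 r θ‖ := by
    have := norm_sub_norm_le (2 : ℂ) (1 + circleMap 0 r θ)
    rw [show (2 : ℂ) - (1 + circleMap 0 r θ) = 1 - circleMap 0 r θ by ring,
      Complex.norm_two] at this
    linarith
  have hpos : 0 < ‖1 + circleMap 0 r θ‖ :=
    norm_pos_iff.mpr (one_add_circleMap_ne_zero (abs_lt.mpr ⟨by linarith, hr1⟩) θ)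
  unfold koebeMeanIntegrand
  calc 2 ^ (-|q|) * (2 * (1 - r)) ^ (-(3 * p - 2 * q))
      ≤ r ^ (-q) * 1 * ‖1 + circleMap 0 r θ‖ ^ (-(3 * p - 2 * q)) := by
        rw [mul_one]
        exact mul_le_mul (rpow_neg_mem_Icc_of_mem_Icc ⟨hr, hr1.le⟩ q).1
          (rpow_le_rpow_of_nonpos hpos hplus (by linarith)) (by positivity)
          (rpow_nonneg (by linarith) _)
    _ ≤ _ := by
        gcongr
        exact one_le_rpow hminus hp

lemma integral_koebeMeanIntegrand_le (hp : 0 ≤ p) (hpq : 1 < 3 * p - 2 * q) (hr : 1 / 2 ≤ r)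
    (hr1 : r < 1) :
    ∫ θ in (0 : ℝ)..(2 * π), koebeMeanIntegrand p q r θ
      ≤ 2 ^ |q| * 2 ^ p * 4 ^ (3 * p - 2 * q) * (2 / (3 * p - 2 * q - 1))
        * (1 - r) ^ (1 - (3 * p - 2 * q)) := by
  set s := 3 * p - 2 * q
  have hcont : Continuous fun θ => (1 - r + |θ - π|) ^ (-s) :=
    Continuous.rpow_const (by fun_prop) fun θ => Or.inl (by linarith [abs_nonneg (θ - π)])
  calc ∫ θ in (0 : ℝ)..(2 * π), koebeMeanIntegrand p q r θ
      ≤ ∫ θ in (0 : ℝ)..(2 * π), 2 ^ |q| * 2 ^ p * 4 ^ s * (1 - r + |θ - π|) ^ (-s) := by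
        refine intervalIntegral.integral_mono_on (by positivity)
          ((continuous_koebeMeanIntegrand hp (abs_lt.mpr ⟨by linarith, hr1⟩)
            ).intervalIntegrable _ _)
          ((hcont.const_mul _).intervalIntegrable _ _) fun θ hθ =>
            koebeMeanIntegrand_le hp (by linarith) hr hr1
              (abs_le.mpr ⟨by linarith [hθ.1], by linarith [hθ.2]⟩)
    _ = 2 ^ |q| * 2 ^ p * 4 ^ s * ∫ θ in (π - π)..(π + π), (1 - r + |θ - π|) ^ (-s) := by
        rw [intervalIntegral.integral_const_mul, sub_self, ← two_mul]
    _ ≤ 2 ^ |q| * 2 ^ p * 4 ^ s * (2 * ((1 - r) ^ (1 - s) / (s - 1))) := by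
        gcongr
        exact integral_add_abs_sub_rpow_neg_le (by linarith) hpq π pi_pos.le
    _ = _ := by ring

lemma le_integral_koebeMeanIntegrand (hp : 0 ≤ p) (hpq : 0 ≤ 3 * p - 2 * q) (hr : 1 / 2 ≤ r)
    (hr1 : r < 1) :
    2 ^ (-|q|) * 2 ^ (-(3 * p - 2 * q)) * (1 - r) ^ (1 - (3 * p - 2 * q))
      ≤ ∫ θ in (0 : ℝ)..(2 * π), koebeMeanIntegrand p q r θ := by
  set s := 3 * p - 2 * q
  have ha : 0 < 1 - r := by linarith
  have hint : ∀ u v, IntervalIntegrable (koebeMeanIntegrand p q r) volume u v :=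
    (continuous_koebeMeanIntegrand hp (abs_lt.mpr ⟨by linarith, hr1⟩)).intervalIntegrable
  calc 2 ^ (-|q|) * 2 ^ (-s) * (1 - r) ^ (1 - s)
      = ∫ _ in π..(π + (1 - r)), 2 ^ (-|q|) * (2 * (1 - r)) ^ (-s) := by
        rw [intervalIntegral.integral_const, smul_eq_mul, add_sub_cancel_left,
          mul_rpow zero_le_two ha.le, rpow_sub ha, rpow_one, rpow_neg ha.le]
        ring
    _ ≤ ∫ θ in π..(π + (1 - r)), koebeMeanIntegrand p q r θ :=
        intervalIntegral.integral_mono_on (by linarith) intervalIntegrable_const (hint _ _)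
          fun θ hθ => le_koebeMeanIntegrand hp hpq hr hr1 hθ
    _ ≤ ∫ θ in (0 : ℝ)..(2 * π), koebeMeanIntegrand p q r θ :=
        intervalIntegral.integral_mono_interval pi_pos.le (by linarith)
          (by linarith [pi_gt_three])
          (Filter.Eventually.of_forall (koebeMeanIntegrand_nonneg p q (by linarith))) (hint _ _)

end koebeMeanIntegrand

theorem koebe_saturates_universal_bound
    (p q : ℝ) (hp : 0 ≤ p) (hpq : 0 < 3 * p - 2 * q - 1) :
    ∃ c > 0, ∃ C > 0, ∀ r : ℝ, r ∈ Set.Ico (1/2 : ℝ) 1 →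
      c * (1 - r) ^ (-(3 * p - 2 * q - 1)) ≤
        (∫ θ in (0:ℝ)..(2 * Real.pi),
          ‖deriv (fun z : ℂ => z / (1 + z) ^ 2)
              ((r : ℂ) * Complex.exp ((θ : ℂ) * Complex.I))‖ ^ p /
          ‖((r : ℂ) * Complex.exp ((θ : ℂ) * Complex.I)) /
              (1 + (r : ℂ) * Complex.exp ((θ : ℂ) * Complex.I)) ^ 2‖ ^ q) ∧
      (∫ θ in (0:ℝ)..(2 * Real.pi),
          ‖deriv (fun z : ℂ => z / (1 + z) ^ 2)
              ((r : ℂ) * Complex.exp ((θ : ℂ) * Complex.I))‖ ^ p /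
          ‖((r : ℂ) * Complex.exp ((θ : ℂ) * Complex.I)) /
              (1 + (r : ℂ) * Complex.exp ((θ : ℂ) * Complex.I)) ^ 2‖ ^ q)
        ≤ C * (1 - r) ^ (-(3 * p - 2 * q - 1)) := by
  refine ⟨2 ^ (-|q|) * 2 ^ (-(3 * p - 2 * q)), by positivity,
    2 ^ |q| * 2 ^ p * 4 ^ (3 * p - 2 * q) * (2 / (3 * p - 2 * q - 1)),
    mul_pos (by positivity) (div_pos two_pos hpq), fun r ⟨hr, hr1⟩ => ?_⟩
  rw [intervalIntegral.integral_congr fun θ _ =>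
      koebe_integrand_eq_koebeMeanIntegrand p q (by linarith) hr1 θ,
    show -(3 * p - 2 * q - 1) = 1 - (3 * p - 2 * q) by ring]
  exact ⟨le_integral_koebeMeanIntegrand hp (by linarith) hr hr1,
    integral_koebeMeanIntegrand_le hp (by linarith) hr hr1⟩
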